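/- arXiv:1410.3688 — 7 statements merged into one kernel-verified Lean document; each statement's English description precedes it below -/
import Mathlib

section
/- Let U_c > 0, I_c > 0, and let P : ℕ → ℝ be strictly decreasing, with payoffs V(U, k) = −U_c and V(NU, k) = −I_c·P(k). Suppose ψ ≥ 1 satisfies I_c·P(ψ) = U_c. Then: (a) for every k ≥ ψ + 2, the first equilibrium condition fails, i.e., V(NU, k − 1) > V(U, k); (b) for every k ≤ ψ − 1, the second equilibrium condition fails, i.e., V(NU, k) < V(U, k + 1). Consequently, every number of updaters k satisfying both pure Nash equilibrium conditions lies in {ψ, ψ + 1}. -/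
/-- with payoffs `V(U,k) = −U_c` and `V(NU,k) = −I_c·P(k)`, `P`
strictly decreasing and `ψ ≥ 1` with `I_c·P(ψ) = U_c`:
(a) for `k ≥ ψ + 2` the first equilibrium condition fails, `V(NU, k−1) > V(U, k)`;
(b) for `k ≤ ψ − 1` the second fails, `V(NU, k) < V(U, k+1)`.
Consequently any `k` satisfying both pure-NE conditions lies in `{ψ, ψ+1}`. -/
theorem pure_NE_uniqueness
    (Uc Ic : ℝ) (hUc : 0 < Uc) (hIc : 0 < Ic)
    (P : ℕ → ℝ) (hP : StrictAnti P)
    (VU VNU : ℕ → ℝ)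
    (hVU : ∀ k, VU k = -Uc) (hVNU : ∀ k, VNU k = -(Ic * P k))
    (ψ : ℕ) (hψ : 1 ≤ ψ) (heq : Ic * P ψ = Uc) :
    (∀ k, ψ + 2 ≤ k → VNU (k - 1) > VU k) ∧
    (∀ k, k ≤ ψ - 1 → VNU k < VU (k + 1)) ∧
    (∀ k, (VNU (k - 1) ≤ VU k ∧ VNU k ≥ VU (k + 1)) → k = ψ ∨ k = ψ + 1) := by
  have ha : ∀ k, ψ + 2 ≤ k → VNU (k - 1) > VU k := by
    intro k hk
    rw [hVNU, hVU, ← heq, gt_iff_lt, neg_lt_neg_iff]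
    exact mul_lt_mul_of_pos_left (hP (by omega)) hIc
  have hb : ∀ k, k ≤ ψ - 1 → VNU k < VU (k + 1) := by
    intro k hk
    rw [hVNU, hVU, ← heq, neg_lt_neg_iff]
    exact mul_lt_mul_of_pos_left (hP (by omega)) hIc
  refine ⟨ha, hb, fun k ⟨h1, h2⟩ => ?_⟩
  by_contra h
  rcases (by omega : ψ + 2 ≤ k ∨ k ≤ ψ - 1) with hc | hc
  · exact absurd h1 (not_le.mpr (ha k hc))
  · exact absurd h2 (not_le.mpr (hb k hc))
end

section
/- Let N ≥ 2 and a : ℕ → ℝ with a(k+1) < a(k) for all 1 ≤ k ≤ N−1. Then the function D(p) = Σ_{k=1}^{N} C(N−1, k−1)·p^{k−1}·(1−p)^{N−k}·a(k) is strictly decreasing on the interval [0, 1]. -/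
/-!
`D(p)` is the Bernstein polynomial of degree `N - 1` with coefficients `a (ν + 1)`. The derivative
of a Bernstein combination of degree `n + 1` is `n + 1` times the Bernstein combination of degree
`n` of the forward differences of its coefficients; these differences are negative and the
Bernstein basis polynomials are positive on `(0, 1)`, so `D' < 0` there.
-/

open Finset Polynomial

namespace bernsteinPolynomial

theorem derivative_sum_smul {R : Type*} [CommRing R] (n : ℕ) (b : ℕ → R) :
    derivative (∑ ν ∈ range (n + 2), b ν • bernsteinPolynomial R (n + 1) ν) =
      (n + 1 : R[X]) * ∑ ν ∈ range (n + 1), (b (ν + 1) - b ν) • bernsteinPolynomial R n ν := by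
  have hshift : ∑ ν ∈ range (n + 1), b (ν + 1) • bernsteinPolynomial R n (ν + 1) =
      ∑ ν ∈ range (n + 1), b ν • bernsteinPolynomial R n ν - b 0 • bernsteinPolynomial R n 0 := by
    rw [eq_sub_iff_add_eq, ← sum_range_succ' (fun ν => b ν • bernsteinPolynomial R n ν),
      sum_range_succ, eq_zero_of_lt R (Nat.lt_succ_self n), smul_zero, add_zero]
  have hsucc (ν : ℕ) : b (ν + 1) • derivative (bernsteinPolynomial R (n + 1) (ν + 1)) =
      (n + 1 : R[X]) * (b (ν + 1) • bernsteinPolynomial R n ν -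
        b (ν + 1) • bernsteinPolynomial R n (ν + 1)) := by
    rw [derivative_succ_aux, ← mul_smul_comm, smul_sub]
  rw [derivative_sum, sum_range_succ']
  simp only [derivative_smul, hsucc, ← mul_sum, sum_sub_distrib, hshift, derivative_zero,
    sub_smul, Nat.add_sub_cancel, ← mul_smul_comm]
  push_cast
  ring

theorem eval_pos {n ν : ℕ} (h : ν ≤ n) {x : ℝ} (hx : x ∈ Set.Ioo 0 1) :
    0 < (bernsteinPolynomial ℝ n ν).eval x := by
  have := Nat.choose_pos h
  have := sub_pos.2 hx.2
  have := hx.1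
  simp only [bernsteinPolynomial, eval_mul, eval_pow, eval_natCast, eval_X, eval_sub, eval_one]
  positivity

theorem strictAntiOn_eval_sum_smul {n : ℕ} {b : ℕ → ℝ} (hb : ∀ ν ≤ n, b (ν + 1) < b ν) :
    StrictAntiOn (fun x => (∑ ν ∈ range (n + 2), b ν • bernsteinPolynomial ℝ (n + 1) ν).eval x)
      (Set.Icc 0 1) := by
  refine strictAntiOn_of_deriv_neg (convex_Icc 0 1) (Polynomial.continuousOn _) fun x hx => ?_
  rw [interior_Icc] at hx
  rw [Polynomial.deriv, derivative_sum_smul, eval_mul, eval_finsetSum]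
  refine mul_neg_of_pos_of_neg (by simp only [eval_add, eval_natCast, eval_one]; positivity)
    (sum_neg (fun ν hν => ?_) nonempty_range_add_one)
  rw [mem_range, Nat.lt_succ_iff] at hν
  rw [eval_smul, smul_eq_mul]
  exact mul_neg_of_neg_of_pos (sub_neg.2 (hb ν hν)) (eval_pos hν hx)

theorem sum_Icc_choose_mul_eq_eval_sum_smul (n : ℕ) (a : ℕ → ℝ) (p : ℝ) :
    ∑ k ∈ Icc 1 (n + 1), (n.choose (k - 1) : ℝ) * p ^ (k - 1) * (1 - p) ^ (n + 1 - k) * a k =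
      (∑ ν ∈ range (n + 1), a (ν + 1) • bernsteinPolynomial ℝ n ν).eval p := by
  rw [← Ico_add_one_right_eq_Icc, sum_Ico_eq_sum_range, eval_finsetSum, Nat.add_sub_cancel]
  refine sum_congr rfl fun ν _ => ?_
  simp only [add_comm 1 ν, add_tsub_cancel_right, Nat.add_sub_add_right, bernsteinPolynomial,
    eval_smul, eval_mul, eval_natCast, eval_pow, eval_X, eval_sub, eval_one, smul_eq_mul]
  ring

end bernsteinPolynomial

open Finset in
/-- if `a(k+1) < a(k)` for all `1 ≤ k ≤ N−1`, then
`D(p) = Σ_{k=1}^{N} C(N−1,k−1) p^{k−1} (1−p)^{N−k} a(k)` is strictly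
decreasing on `[0, 1]`. -/
theorem bernstein_sum_strictAntiOn
    (N : ℕ) (hN : 2 ≤ N) (a : ℕ → ℝ)
    (ha : ∀ k, 1 ≤ k → k ≤ N - 1 → a (k + 1) < a k) :
    StrictAntiOn
      (fun p : ℝ => ∑ k ∈ Finset.Icc 1 N,
        ((N - 1).choose (k - 1) : ℝ) * p ^ (k - 1) * (1 - p) ^ (N - k) * a k)
      (Set.Icc 0 1) := by
  obtain ⟨n, rfl⟩ : ∃ n, N = n + 1 + 1 := ⟨N - 2, by omega⟩
  have hanti := bernsteinPolynomial.strictAntiOn_eval_sum_smul (n := n) (b := fun ν => a (ν + 1))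
    fun ν hν => ha (ν + 1) (by omega) (by omega)
  simpa only [← bernsteinPolynomial.sum_Icc_choose_mul_eq_eval_sum_smul, Nat.add_sub_cancel] using hanti
end

section
/- Let N ≥ 2 and a : ℕ → ℝ with a(k+1) < a(k) for all 1 ≤ k ≤ N−1, and let D(p) = Σ_{k=1}^{N} C(N−1, k−1)·p^{k−1}·(1−p)^{N−k}·a(k). Then D(0) = a(1) and D(1) = a(N), and if moreover a(1) > 0 > a(N), there exists a unique p* ∈ (0, 1) such that D(p*) = 0. -/
/-!
Writing `n = N - 1` and `b ν = a (ν + 1)`, `D` is the evaluation of the Bernstein polynomial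
`∑ ν ≤ n, b ν · C(n, ν) X^ν (1 - X)^(n - ν)`. Its derivative is `n` times the Bernstein
polynomial of degree `n - 1` of the forward differences `b (ν + 1) - b ν`, all negative; since
Bernstein basis polynomials are positive on `(0, 1)`, `D` is strictly decreasing on `[0, 1]`.
Its values at the endpoints are `a 1` and `a N`, so the intermediate value theorem gives exactly
one zero in `(0, 1)` when these have opposite signs.
-/

open Finset Polynomial

noncomputable def bernsteinSum (R : Type*) [CommRing R] (n : ℕ) (b : ℕ → R) : R[X] :=
  ∑ ν ∈ range (n + 1), C (b ν) * bernsteinPolynomial R n ν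

namespace bernsteinSum

variable {R : Type*} [CommRing R]

theorem eval_eq (n : ℕ) (b : ℕ → R) (x : R) :
    (bernsteinSum R n b).eval x =
      ∑ ν ∈ range (n + 1), (n.choose ν : R) * x ^ ν * (1 - x) ^ (n - ν) * b ν := by
  simp only [bernsteinSum, bernsteinPolynomial, eval_finsetSum, eval_mul, eval_C, eval_pow,
    eval_sub, Polynomial.eval_one, eval_X, eval_natCast]
  exact sum_congr rfl fun ν _ => mul_comm _ _

theorem eval_zero (n : ℕ) (b : ℕ → R) : (bernsteinSum R n b).eval 0 = b 0 := by
  simp [bernsteinSum, eval_finsetSum, bernsteinPolynomial.eval_at_0]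

theorem eval_one (n : ℕ) (b : ℕ → R) : (bernsteinSum R n b).eval 1 = b n := by
  simp [bernsteinSum, eval_finsetSum, bernsteinPolynomial.eval_at_1]

theorem derivative_succ (n : ℕ) (b : ℕ → R) :
    derivative (bernsteinSum R (n + 1) b) =
      (n + 1 : R[X]) * bernsteinSum R n (fun ν => b (ν + 1) - b ν) := by
  have hshift : ∑ ν ∈ range (n + 1), C (b (ν + 1)) * bernsteinPolynomial R n (ν + 1) +
      C (b 0) * bernsteinPolynomial R n 0 =
        ∑ ν ∈ range (n + 1), C (b ν) * bernsteinPolynomial R n ν := by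
    rw [← sum_range_succ' (fun ν => C (b ν) * bernsteinPolynomial R n ν), sum_range_succ,
      bernsteinPolynomial.eq_zero_of_lt R n.lt_succ_self, mul_zero, add_zero]
  simp only [bernsteinSum, derivative_sum, derivative_C_mul, C_sub, sub_mul, sum_sub_distrib]
  rw [sum_range_succ' _ (n + 1), bernsteinPolynomial.derivative_zero, ← hshift]
  simp only [bernsteinPolynomial.derivative_succ_aux, add_tsub_cancel_right, mul_sub,
    sum_sub_distrib, mul_left_comm (C _), ← mul_sum]
  push_cast
  ring

theorem eval_neg {n : ℕ} {b : ℕ → ℝ} (hb : ∀ ν ≤ n, b ν < 0) {x : ℝ} (hx : x ∈ Set.Ioo 0 1) :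
    (bernsteinSum ℝ n b).eval x < 0 := by
  rw [eval_eq]
  refine sum_neg (fun ν hν => ?_) nonempty_range_add_one
  have hν : ν ≤ n := Nat.lt_succ_iff.mp (mem_range.mp hν)
  have hbasis : 0 < (n.choose ν : ℝ) * x ^ ν * (1 - x) ^ (n - ν) := by
    have := hx.1
    have := sub_pos.mpr hx.2
    have := Nat.choose_pos hν
    positivity
  exact mul_neg_of_pos_of_neg hbasis (hb ν hν)

theorem strictAntiOn {n : ℕ} {b : ℕ → ℝ} (hb : ∀ ν ≤ n, b (ν + 1) < b ν) :
    StrictAntiOn (fun x => (bernsteinSum ℝ (n + 1) b).eval x) (Set.Icc 0 1) := by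
  refine strictAntiOn_of_deriv_neg (convex_Icc 0 1) (Polynomial.continuousOn _) fun x hx => ?_
  rw [interior_Icc] at hx
  rw [Polynomial.deriv, derivative_succ, eval_mul]
  have hdiff : (bernsteinSum ℝ n fun ν => b (ν + 1) - b ν).eval x < 0 :=
    eval_neg (fun ν hν => sub_neg.mpr (hb ν hν)) hx
  refine mul_neg_of_pos_of_neg ?_ hdiff
  rw [eval_add, eval_natCast, Polynomial.eval_one]
  positivity

end bernsteinSum

open Finset in
/-- with `D(p) = Σ_{k=1}^{N} C(N−1,k−1) p^{k−1} (1−p)^{N−k} a(k)`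
and `a` strictly decreasing on `{1,…,N}`, we have `D(0) = a(1)`, `D(1) = a(N)`,
and if `a(1) > 0 > a(N)` there is a unique `p* ∈ (0,1)` with `D(p*) = 0`
(the fully mixed Nash equilibrium activation probability). -/
theorem fully_mixed_NE_exists_unique
    (N : ℕ) (hN : 2 ≤ N) (a : ℕ → ℝ)
    (ha : ∀ k, 1 ≤ k → k ≤ N - 1 → a (k + 1) < a k)
    (D : ℝ → ℝ)
    (hD : ∀ p, D p = ∑ k ∈ Finset.Icc 1 N,
      ((N - 1).choose (k - 1) : ℝ) * p ^ (k - 1) * (1 - p) ^ (N - k) * a k) :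
    D 0 = a 1 ∧ D 1 = a N ∧
    (a 1 > 0 → 0 > a N → ∃! p : ℝ, p ∈ Set.Ioo (0 : ℝ) 1 ∧ D p = 0) := by
  obtain ⟨n, rfl⟩ : ∃ n, N = n + 2 := ⟨N - 2, by omega⟩
  set P := bernsteinSum ℝ (n + 1) fun ν => a (ν + 1)
  have hDP : D = fun p => P.eval p := by
    ext p
    rw [hD, bernsteinSum.eval_eq, ← Ico_add_one_right_eq_Icc, sum_Ico_eq_sum_range]
    simp [add_comm 1]
  have hD0 : D 0 = a 1 := (congrFun hDP 0).trans (bernsteinSum.eval_zero _ _)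
  have hD1 : D 1 = a (n + 2) := (congrFun hDP 1).trans (bernsteinSum.eval_one _ _)
  have hanti : StrictAntiOn D (Set.Icc 0 1) :=
    hDP ▸ bernsteinSum.strictAntiOn fun ν hν => ha (ν + 1) (by omega) (by omega)
  refine ⟨hD0, hD1, fun h0 h1 => ?_⟩
  obtain ⟨p, hp, hDp⟩ := intermediate_value_Ioo' zero_le_one (hDP ▸ P.continuousOn)
    (show (0 : ℝ) ∈ Set.Ioo (D 1) (D 0) by rw [hD0, hD1]; exact ⟨h1, h0⟩)
  exact ⟨p, ⟨hp, hDp⟩, fun q ⟨hq, hDq⟩ =>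
    hanti.injOn (Set.Ioo_subset_Icc_self hq) (Set.Ioo_subset_Icc_self hp) (hDq.trans hDp.symm)⟩
end

section
/- Let N ≥ 2 and a : ℕ → ℝ with a(k+1) < a(k) for all 1 ≤ k ≤ N−1 and a(1) > 0 > a(N). Define D(p) = Σ_{k=1}^{N} C(N−1, k−1)·p^{k−1}·(1−p)^{N−k}·a(k), and for p, q ∈ [0, 1] define the deviation payoff φ_p(q) = (2q − 1)·D(p). Then there exists a unique p* ∈ (0, 1) such that φ_{p*}(p*) ≥ φ_{p*}(q) for every q ∈ [0, 1]; moreover this p* is characterized by D(p*) = 0. In particular, a fully mixed probability p ∈ (0, 1) is a symmetric Nash equilibrium (no player can improve its expected payoff by unilaterally deviating to any q ∈ [0, 1]) if and only if D(p) = 0. -/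
/-!
`D` is the degree-`(N - 1)` Bernstein polynomial with coefficients `a 1, …, a N`. Its derivative
is `N - 1` times the Bernstein polynomial of the differences `a (k + 1) - a k < 0`, so `D` strictly
decreases on `[0, 1]` from `D 0 = a 1 > 0` to `D 1 = a N < 0` and has exactly one root in `(0, 1)`.
The deviation payoff `(2q - 1) D(p)` is affine in `q`, so an interior `p` is a best reply to itself
exactly when the slope `D(p)` vanishes.
-/

open Finset Polynomial

section CommRing

variable {R : Type*} [CommRing R]

noncomputable def bernsteinCombination (n : ℕ) (c : ℕ → R) : R[X] :=
  ∑ ν ∈ range (n + 1), C (c ν) * bernsteinPolynomial R n ν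

theorem derivative_bernsteinCombination_succ (n : ℕ) (c : ℕ → R) :
    derivative (bernsteinCombination (n + 1) c) =
      (n + 1 : R[X]) * bernsteinCombination n (fun ν => c (ν + 1) - c ν) := by
  have shift : ∑ ν ∈ range (n + 1), C (c (ν + 1)) * bernsteinPolynomial R n (ν + 1)
      + C (c 0) * bernsteinPolynomial R n 0 = bernsteinCombination n c := by
    rw [← sum_range_succ' (fun ν => C (c ν) * bernsteinPolynomial R n ν), sum_range_succ,
      bernsteinPolynomial.eq_zero_of_lt R (lt_add_one n), mul_zero, add_zero, bernsteinCombination]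
  have split : bernsteinCombination n (fun ν => c (ν + 1) - c ν) =
      ∑ ν ∈ range (n + 1), C (c (ν + 1)) * bernsteinPolynomial R n ν -
        bernsteinCombination n c := by
    simp only [bernsteinCombination, C_sub, sub_mul, sum_sub_distrib]
  rw [split, ← shift, bernsteinCombination, derivative_sum, sum_range_succ']
  simp only [derivative_C_mul, bernsteinPolynomial.derivative_succ_aux,
    bernsteinPolynomial.derivative_zero, mul_sub, sum_sub_distrib, mul_add, mul_sum]
  push_cast
  simp only [mul_left_comm (C _)]
  ring

theorem eval_bernsteinCombination_zero (n : ℕ) (c : ℕ → R) :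
    (bernsteinCombination n c).eval 0 = c 0 := by
  simp [bernsteinCombination, eval_finsetSum, bernsteinPolynomial.eval_at_0]

theorem eval_bernsteinCombination_one (n : ℕ) (c : ℕ → R) :
    (bernsteinCombination n c).eval 1 = c n := by
  simp [bernsteinCombination, eval_finsetSum, bernsteinPolynomial.eval_at_1]

theorem sum_Icc_choose_mul_eq_eval_bernsteinCombination (n : ℕ) (a : ℕ → R) (x : R) :
    ∑ k ∈ Icc 1 (n + 1), (n.choose (k - 1) : R) * x ^ (k - 1) * (1 - x) ^ (n + 1 - k) * a k =
      (bernsteinCombination n fun ν => a (ν + 1)).eval x := by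
  rw [← Ico_add_one_right_eq_Icc, sum_Ico_eq_sum_range, add_tsub_cancel_right, bernsteinCombination,
    eval_finsetSum]
  refine sum_congr rfl fun ν _ => ?_
  rw [add_comm 1 ν, add_tsub_cancel_right, Nat.add_sub_add_right]
  simp only [bernsteinPolynomial, eval_mul, eval_pow, eval_sub, eval_one, eval_X, eval_natCast,
    eval_C]
  ring

end CommRing

section OrderedRing

variable {R : Type*} [CommRing R] [LinearOrder R] [IsStrictOrderedRing R]

theorem eval_bernsteinPolynomial_pos {n ν : ℕ} (h : ν ≤ n) {x : R} (hx : x ∈ Set.Ioo 0 1) :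
    0 < (bernsteinPolynomial R n ν).eval x := by
  simp only [bernsteinPolynomial, eval_mul, eval_pow, eval_sub, eval_one, eval_X, eval_natCast]
  exact mul_pos (mul_pos (by exact_mod_cast Nat.choose_pos h) (pow_pos hx.1 ν))
    (pow_pos (sub_pos.2 hx.2) _)

theorem eval_bernsteinCombination_neg {n : ℕ} {c : ℕ → R} (hc : ∀ ν ≤ n, c ν < 0) {x : R}
    (hx : x ∈ Set.Ioo 0 1) :
    (bernsteinCombination n c).eval x < 0 := by
  rw [bernsteinCombination, eval_finsetSum]
  refine sum_neg (fun ν hν => ?_) nonempty_range_add_one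
  have hν : ν ≤ n := Nat.le_of_lt_succ (mem_range.1 hν)
  rw [eval_mul, eval_C]
  exact mul_neg_of_neg_of_pos (hc ν hν) (eval_bernsteinPolynomial_pos hν hx)

end OrderedRing

theorem strictAntiOn_eval_bernsteinCombination {n : ℕ} {c : ℕ → ℝ}
    (hc : ∀ ν ≤ n, c (ν + 1) < c ν) :
    StrictAntiOn (fun x => (bernsteinCombination (n + 1) c).eval x) (Set.Icc 0 1) := by
  refine strictAntiOn_of_deriv_neg (convex_Icc 0 1) (Polynomial.continuousOn _) fun x hx => ?_
  rw [interior_Icc] at hx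
  rw [Polynomial.deriv, derivative_bernsteinCombination_succ, eval_mul]
  exact mul_neg_of_pos_of_neg (by rw [eval_add, eval_natCast, eval_one]; positivity)
    (eval_bernsteinCombination_neg (fun ν hν => sub_neg.2 (hc ν hν)) hx)

theorem existsUnique_eval_bernsteinCombination_eq_zero {n : ℕ} {c : ℕ → ℝ}
    (hc : ∀ ν ≤ n, c (ν + 1) < c ν) (h0 : 0 < c 0) (hn : c (n + 1) < 0) :
    ∃! x, x ∈ Set.Ioo 0 1 ∧ (bernsteinCombination (n + 1) c).eval x = 0 := by
  obtain ⟨x, hx, hx0⟩ := intermediate_value_Ioo' zero_le_one (Polynomial.continuousOn _)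
    (show (0 : ℝ) ∈ Set.Ioo _ _ by
      rw [eval_bernsteinCombination_zero, eval_bernsteinCombination_one]; exact ⟨hn, h0⟩)
  refine ⟨x, ⟨hx, hx0⟩, fun y ⟨hy, hy0⟩ => ?_⟩
  exact (strictAntiOn_eval_bernsteinCombination hc).injOn (Set.Ioo_subset_Icc_self hy)
    (Set.Ioo_subset_Icc_self hx) (hy0.trans hx0.symm)

theorem forall_deviation_le_iff {d p : ℝ} (hp : p ∈ Set.Ioo 0 1) :
    (∀ q ∈ Set.Icc (0 : ℝ) 1, (2 * q - 1) * d ≤ (2 * p - 1) * d) ↔ d = 0 := by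
  refine ⟨fun h => ?_, by rintro rfl _ _; simp⟩
  have h0 := h 0 ⟨le_rfl, zero_le_one⟩
  have h1 := h 1 ⟨zero_le_one, le_rfl⟩
  nlinarith [hp.1, hp.2]

/-- in the symmetric mixed game with deviation payoff
`φ_p(q) = (2q − 1)·D(p)` where
`D(p) = Σ_{k=1}^{N} C(N−1,k−1) p^{k−1} (1−p)^{N−k} a(k)`, `a` strictly
decreasing with `a(1) > 0 > a(N)`: there is a unique `p* ∈ (0,1)` such that
`φ_{p*}(p*) ≥ φ_{p*}(q)` for all `q ∈ [0,1]`, characterized by `D(p*) = 0`;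
moreover a fully mixed `p ∈ (0,1)` is a symmetric Nash equilibrium iff
`D(p) = 0`. -/
theorem fully_mixed_symmetric_NE_characterization
    (N : ℕ) (hN : 2 ≤ N) (a : ℕ → ℝ)
    (ha : ∀ k, 1 ≤ k → k ≤ N - 1 → a (k + 1) < a k)
    (ha1 : a 1 > 0) (haN : 0 > a N)
    (D : ℝ → ℝ)
    (hD : ∀ p, D p = ∑ k ∈ Finset.Icc 1 N,
      ((N - 1).choose (k - 1) : ℝ) * p ^ (k - 1) * (1 - p) ^ (N - k) * a k)
    (φ : ℝ → ℝ → ℝ) (hφ : ∀ p q, φ p q = (2 * q - 1) * D p) :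
    (∃! p : ℝ, p ∈ Set.Ioo (0 : ℝ) 1 ∧
        (∀ q ∈ Set.Icc (0 : ℝ) 1, φ p q ≤ φ p p) ∧ D p = 0) ∧
    (∀ p ∈ Set.Ioo (0 : ℝ) 1,
        (∀ q ∈ Set.Icc (0 : ℝ) 1, φ p q ≤ φ p p) ↔ D p = 0) := by
  obtain ⟨n, rfl⟩ : ∃ n, N = n + 2 := ⟨N - 2, by omega⟩
  have hD_eval : ∀ p, D p = (bernsteinCombination (n + 1) fun ν => a (ν + 1)).eval p := fun p => by
    rw [hD, ← sum_Icc_choose_mul_eq_eval_bernsteinCombination]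
    rfl
  have hNE : ∀ p ∈ Set.Ioo (0 : ℝ) 1, (∀ q ∈ Set.Icc (0 : ℝ) 1, φ p q ≤ φ p p) ↔ D p = 0 :=
    fun p hp => by simpa only [hφ] using forall_deviation_le_iff hp
  have hroot : ∃! p, p ∈ Set.Ioo (0 : ℝ) 1 ∧ D p = 0 := by
    simpa only [hD_eval] using existsUnique_eval_bernsteinCombination_eq_zero
      (c := fun ν => a (ν + 1)) (fun ν hν => ha (ν + 1) (by omega) (by omega)) ha1 haN
  refine ⟨(existsUnique_congr fun p => ?_).2 hroot, hNE⟩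
  exact ⟨fun h => ⟨h.1, h.2.2⟩, fun h => ⟨h.1, (hNE p h.1).2 h.2, h.2⟩⟩
end

section
/- Let U_c > 0, I_c > 0, and let P : ℕ → ℝ be strictly decreasing and nonnegative; suppose ψ ≥ 1 satisfies I_c·P(ψ) = U_c. Let M ≥ 2 and N_U ≥ ψ. Then for every p ∈ (0, 1), I_c·Σ_{k=0}^{M−1} C(M−1, k)·p^{k}·(1−p)^{M−1−k}·P(N_U + k) < U_c. Consequently the mixer indifference condition (expected infection loss of a non-updating mixer equals the update cost) cannot hold for any p ∈ (0, 1): no Nash equilibrium of type (N_U, N_NU, p*) with N_U ≥ ψ exists. -/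
open Finset in
/-- if `ψ ≥ 1` satisfies `I_c·P(ψ) = U_c` with `P` strictly
decreasing and nonnegative, `M ≥ 2` mixers and `N_U ≥ ψ` pure updaters, then
for every mixing probability `p ∈ (0,1)` the expected infection loss of a
non-updating mixer is strictly below the update cost:
`I_c·Σ_{k=0}^{M−1} C(M−1,k) p^k (1−p)^{M−1−k} P(N_U+k) < U_c`; hence the mixer
indifference condition cannot hold and no equilibrium with `N_U ≥ ψ` exists. -/
theorem no_mixer_NE_above_threshold
    (Uc Ic : ℝ) (hUc : 0 < Uc) (hIc : 0 < Ic)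
    (P : ℕ → ℝ) (hP : StrictAnti P) (hPnonneg : ∀ k, 0 ≤ P k)
    (ψ : ℕ) (hψ : 1 ≤ ψ) (heq : Ic * P ψ = Uc)
    (M NU : ℕ) (hM : 2 ≤ M) (hNU : ψ ≤ NU) :
    ∀ p ∈ Set.Ioo (0 : ℝ) 1,
      Ic * ∑ k ∈ Finset.range M,
        ((M - 1).choose k : ℝ) * p ^ k * (1 - p) ^ (M - 1 - k) * P (NU + k) < Uc ∧
      Ic * ∑ k ∈ Finset.range M,
        ((M - 1).choose k : ℝ) * p ^ k * (1 - p) ^ (M - 1 - k) * P (NU + k) ≠ Uc := by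
  intro p hp
  obtain ⟨hp0, hp1⟩ := hp
  have hq0 : (0:ℝ) < 1 - p := by linarith
  have hM1 : M - 1 + 1 = M := by omega
  have hwsum : ∑ k ∈ Finset.range M,
      ((M - 1).choose k : ℝ) * p ^ k * (1 - p) ^ (M - 1 - k) = 1 := by
    have h := add_pow p (1 - p) (M - 1)
    rw [hM1] at h
    have h2 : ∑ k ∈ Finset.range M,
        ((M - 1).choose k : ℝ) * p ^ k * (1 - p) ^ (M - 1 - k)
        = (p + (1 - p)) ^ (M - 1) := by
      rw [h]; exact Finset.sum_congr rfl fun k _ => by ring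
    rw [h2, show p + (1 - p) = 1 by ring, one_pow]
  have key : ∑ k ∈ Finset.range M,
      ((M - 1).choose k : ℝ) * p ^ k * (1 - p) ^ (M - 1 - k) * P (NU + k)
      < P ψ := by
    have hlt : ∑ k ∈ Finset.range M,
        ((M - 1).choose k : ℝ) * p ^ k * (1 - p) ^ (M - 1 - k) * P (NU + k)
        < ∑ k ∈ Finset.range M,
        ((M - 1).choose k : ℝ) * p ^ k * (1 - p) ^ (M - 1 - k) * P ψ := by
      apply Finset.sum_lt_sum
      · intro i _
        apply mul_le_mul_of_nonneg_left
        · exact hP.antitone (le_trans hNU (Nat.le_add_right _ _))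
        · positivity
      · refine ⟨1, Finset.mem_range.2 (by omega), ?_⟩
        have hw : (0:ℝ) < ((M - 1).choose 1 : ℝ) * p ^ 1 * (1 - p) ^ (M - 1 - 1) := by
          have : 0 < (M - 1).choose 1 := by
            rw [Nat.choose_one_right]; omega
          positivity
        exact mul_lt_mul_of_pos_left (hP (by omega)) hw
    calc _ < _ := hlt
    _ = P ψ := by rw [← Finset.sum_mul, hwsum, one_mul]
  have hlt : Ic * ∑ k ∈ Finset.range M,
      ((M - 1).choose k : ℝ) * p ^ k * (1 - p) ^ (M - 1 - k) * P (NU + k) < Uc := by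
    calc _ < Ic * P ψ := by exact mul_lt_mul_of_pos_left key hIc
    _ = Uc := heq
  exact ⟨hlt, ne_of_lt hlt⟩
end

section
/- Let U_c > 0, I_c > 0, and let P : ℕ → ℝ be strictly decreasing; suppose ψ ≥ 1 satisfies I_c·P(ψ) = U_c. Consider the configuration with exactly one mixer, i.e., N_U + N_NU = N − 1, and suppose N_U < ψ. Then the mixer's payoff from updating, −U_c, strictly exceeds its payoff from not updating, −I_c·P(N_U): −U_c > −I_c·P(N_U). Hence the indifference condition fails for every mixing probability p ∈ [0, 1], and no Nash equilibrium of type (N_U, N_NU, p*) with a single mixer exists; any mixer-and-non-mixer equilibrium requires N_U + N_NU ≤ N − 2. -/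
/-- single-mixer configuration `N_U + N_NU = N − 1` with
`N_U < ψ`, where `ψ ≥ 1` is the pure-equilibrium threshold `I_c·P(ψ) = U_c`
and `P` is strictly decreasing. The mixer's payoff from updating, `−U_c`,
strictly exceeds its payoff from not updating, `−I_c·P(N_U)`; hence the
indifference condition fails for every mixing probability and no single-mixer
equilibrium exists: any mixer-and-non-mixer equilibrium needs
`N_U + N_NU ≤ N − 2`. -/
theorem no_single_mixer_NE
    (Uc Ic : ℝ) (hUc : 0 < Uc) (hIc : 0 < Ic)
    (P : ℕ → ℝ) (hP : StrictAnti P)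
    (ψ : ℕ) (hψ : 1 ≤ ψ) (heq : Ic * P ψ = Uc)
    (N NU NNU : ℕ) (hconf : NU + NNU = N - 1) (hNU : NU < ψ) :
    -Uc > -(Ic * P NU) ∧
    ∀ p ∈ Set.Icc (0 : ℝ) 1, -Uc ≠ -(Ic * P NU) := by
  have h : Uc < Ic * P NU := by
    rw [← heq]
    exact mul_lt_mul_of_pos_left (hP hNU) hIc
  exact ⟨neg_lt_neg h, fun p _ => (neg_lt_neg h).ne'⟩
end

section
/- Let U_c > 0, I_c > 0, let P : ℕ → ℝ satisfy P(k+1) < P(k) for all k, fix N_U ≥ 0 and M ≥ 2, and define h(p) = Σ_{k=0}^{M−1} C(M−1, k)·p^{k}·(1−p)^{M−1−k}·P(N_U + k) for p ∈ [0, 1]. Then h is strictly decreasing on [0, 1] with h(0) = P(N_U) and h(1) = P(N_U + M − 1), and if I_c·P(N_U) > U_c > I_c·P(N_U + M − 1), there exists a unique p* ∈ (0, 1) such that I_c·h(p*) = U_c. -/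
open Finset

/-- Bernstein-weighted sum of `f` with `m+1` terms. -/
noncomputable def Bsum (m : ℕ) (f : ℕ → ℝ) (p : ℝ) : ℝ :=
  ∑ k ∈ Finset.range (m + 1),
    ((m.choose k : ℝ)) * p ^ k * (1 - p) ^ (m - k) * f k

lemma Bsum_rec (m : ℕ) (f : ℕ → ℝ) (p : ℝ) :
    Bsum (m + 1) f p = (1 - p) * Bsum m f p + p * Bsum m (fun k => f (k + 1)) p := by
  unfold Bsum
  rw [Finset.sum_range_succ'
    (fun k => (((m+1).choose k : ℝ)) * p ^ k * (1 - p) ^ (m + 1 - k) * f k)]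
  have hsplit : ∀ k ∈ Finset.range (m + 1),
      (((m+1).choose (k+1) : ℝ)) * p ^ (k+1) * (1 - p) ^ (m + 1 - (k+1)) * f (k+1)
      = ((m.choose (k+1) : ℝ)) * p ^ (k+1) * (1 - p) ^ (m - (k+1)) * (1 - p) * f (k+1)
        + p * (((m.choose k : ℝ)) * p ^ k * (1 - p) ^ (m - k) * f (k+1)) := by
    intro k hk
    have hk' : k < m + 1 := Finset.mem_range.mp hk
    have h1 : (m + 1).choose (k + 1) = m.choose k + m.choose (k + 1) :=
      Nat.choose_succ_succ m k
    have h2 : m + 1 - (k + 1) = m - k := Nat.succ_sub_succ m k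
    rcases lt_or_eq_of_le (Nat.lt_succ_iff.mp hk') with hlt | heq
    · have h3 : m - k = (m - (k + 1)) + 1 := by omega
      rw [h1, h2, h3]
      push_cast
      ring
    · subst heq
      have : k.choose (k + 1) = 0 := Nat.choose_eq_zero_of_lt (by omega)
      rw [h1, h2, this]
      push_cast
      ring
  rw [Finset.sum_congr rfl hsplit, Finset.sum_add_distrib]
  rw [Finset.sum_range_succ
    (fun k => ((m.choose (k+1) : ℝ)) * p ^ (k+1) * (1 - p) ^ (m - (k+1)) * (1 - p) * f (k+1))]
  have hz : m.choose (m + 1) = 0 := Nat.choose_eq_zero_of_lt (by omega)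
  rw [hz]
  rw [Finset.mul_sum, Finset.mul_sum]
  rw [Finset.sum_range_succ'
    (fun k => (1 - p) * (((m.choose k : ℝ)) * p ^ k * (1 - p) ^ (m - k) * f k))]
  have hcong : ∀ k ∈ Finset.range m,
      ((m.choose (k+1) : ℝ)) * p ^ (k+1) * (1 - p) ^ (m - (k+1)) * (1 - p) * f (k+1)
      = (1 - p) * (((m.choose (k+1) : ℝ)) * p ^ (k+1) * (1 - p) ^ (m - (k+1)) * f (k+1)) := by
    intro k _; ring
  rw [Finset.sum_congr rfl hcong]
  simp [pow_succ]
  ring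

lemma Bsum_succ_lt (m : ℕ) (f : ℕ → ℝ) (hf : ∀ k, f (k + 1) < f k) {p : ℝ}
    (hp0 : 0 ≤ p) (hp1 : p ≤ 1) :
    Bsum m (fun k => f (k + 1)) p < Bsum m f p := by
  have h1p : (0 : ℝ) ≤ 1 - p := by linarith
  unfold Bsum
  apply Finset.sum_lt_sum
  · intro i _
    have hw : (0 : ℝ) ≤ ((m.choose i : ℝ)) * p ^ i * (1 - p) ^ (m - i) := by positivity
    exact mul_le_mul_of_nonneg_left (hf i).le hw
  · rcases lt_or_eq_of_le hp1 with hlt | heq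
    · refine ⟨0, Finset.mem_range.mpr (by omega), ?_⟩
      have hw : (0 : ℝ) < ((m.choose 0 : ℝ)) * p ^ 0 * (1 - p) ^ (m - 0) := by
        have : (0:ℝ) < 1 - p := by linarith
        simp [pow_pos this]
      exact mul_lt_mul_of_pos_left (hf 0) hw
    · refine ⟨m, Finset.mem_range.mpr (by omega), ?_⟩
      subst heq
      simpa using hf m

lemma Bsum_strictAntiOn : ∀ m, 1 ≤ m → ∀ f : ℕ → ℝ, (∀ k, f (k + 1) < f k) →
    StrictAntiOn (Bsum m f) (Set.Icc 0 1) := by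
  intro m hm
  induction m, hm using Nat.le_induction with
  | base =>
    intro f hf p hp q hq hpq
    have h0 := hf 0
    simp only [Bsum, Finset.sum_range_succ, Finset.sum_range_zero]
    norm_num
    nlinarith [mul_pos (sub_pos.mpr hpq) (sub_pos.mpr h0)]
  | succ m hm IH =>
    intro f hf p hp q hq hpq
    have IHf := IH f hf
    have IHg := IH (fun k => f (k + 1)) (fun k => hf (k + 1))
    rw [Bsum_rec, Bsum_rec]
    have hAp : Bsum m f q < Bsum m f p := IHf hp hq hpq
    have hBp : Bsum m (fun k => f (k + 1)) q < Bsum m (fun k => f (k + 1)) p := IHg hp hq hpq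
    have hAB : Bsum m (fun k => f (k + 1)) q < Bsum m f q := Bsum_succ_lt m f hf hq.1 hq.2
    have hp1 : p < 1 := lt_of_lt_of_le hpq hq.2
    nlinarith [mul_pos (sub_pos.mpr hp1) (sub_pos.mpr hAp),
      mul_nonneg hp.1 (sub_pos.mpr hBp).le,
      mul_pos (sub_pos.mpr hpq) (sub_pos.mpr hAB)]

lemma Bsum_zero (m : ℕ) (f : ℕ → ℝ) : Bsum m f 0 = f 0 := by
  unfold Bsum
  rw [Finset.sum_eq_single 0]
  · simp
  · intro b _ hb0; simp [zero_pow hb0]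
  · intro hmem; exact absurd (Finset.mem_range.mpr (by omega)) hmem

lemma Bsum_one (m : ℕ) (f : ℕ → ℝ) : Bsum m f 1 = f m := by
  unfold Bsum
  rw [Finset.sum_eq_single m]
  · simp
  · intro b hb hbm
    have hblt : b < m := lt_of_le_of_ne (Nat.lt_succ_iff.mp (Finset.mem_range.mp hb)) hbm
    have : m - b ≠ 0 := Nat.sub_ne_zero_of_lt hblt
    simp [zero_pow this]
  · intro hmem; exact absurd (Finset.mem_range.mpr (by omega)) hmem

lemma Bsum_continuous (m : ℕ) (f : ℕ → ℝ) : Continuous (Bsum m f) := by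
  unfold Bsum
  exact continuous_finset_sum _ (fun k _ => by fun_prop)

open Finset in
/-- the mixer indifference equation. With
`h(p) = Σ_{k=0}^{M−1} C(M−1,k) p^k (1−p)^{M−1−k} P(N_U+k)` and `P` strictly
decreasing, `h` is strictly decreasing on `[0,1]` with `h(0) = P(N_U)` and
`h(1) = P(N_U+M−1)`; if `I_c·P(N_U) > U_c > I_c·P(N_U+M−1)` there is a unique
`p* ∈ (0,1)` solving the indifference condition `I_c·h(p*) = U_c`. -/
theorem mixer_indifference_unique_root
    (Uc Ic : ℝ) (hUc : 0 < Uc) (hIc : 0 < Ic)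
    (P : ℕ → ℝ) (hP : ∀ k, P (k + 1) < P k)
    (NU M : ℕ) (hM : 2 ≤ M)
    (h : ℝ → ℝ)
    (hh : ∀ p, h p = ∑ k ∈ Finset.range M,
      ((M - 1).choose k : ℝ) * p ^ k * (1 - p) ^ (M - 1 - k) * P (NU + k)) :
    StrictAntiOn h (Set.Icc 0 1) ∧
    h 0 = P NU ∧ h 1 = P (NU + (M - 1)) ∧
    (Ic * P NU > Uc → Uc > Ic * P (NU + (M - 1)) →
      ∃! p : ℝ, p ∈ Set.Ioo (0 : ℝ) 1 ∧ Ic * h p = Uc) := by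
  obtain ⟨m, rfl⟩ : ∃ m, M = m + 1 := ⟨M - 1, (Nat.succ_pred_eq_of_pos (by omega)).symm⟩
  have hm1 : 1 ≤ m := by omega
  set f : ℕ → ℝ := fun k => P (NU + k) with hf_def
  have hf : ∀ k, f (k + 1) < f k := by
    intro k
    have : P (NU + k + 1) < P (NU + k) := hP (NU + k)
    simpa [hf_def, Nat.add_assoc] using this
  have hfun : h = Bsum m f := by
    funext p
    rw [hh]
    unfold Bsum
    simp [hf_def]
  have hanti : StrictAntiOn h (Set.Icc 0 1) := by
    rw [hfun]; exact Bsum_strictAntiOn m hm1 f hf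
  have hM1 : m + 1 - 1 = m := by omega
  have h0 : h 0 = P NU := by
    rw [hfun, Bsum_zero]; simp [hf_def]
  have h1 : h 1 = P (NU + (m + 1 - 1)) := by
    rw [hfun, Bsum_one, hM1]
  refine ⟨hanti, h0, h1, ?_⟩
  intro hgt hlt
  have hc1 : Uc / Ic < P NU := by
    rw [div_lt_iff₀ hIc]; nlinarith
  have hc2 : P (NU + m) < Uc / Ic := by
    rw [lt_div_iff₀ hIc]
    rw [hM1] at hlt
    nlinarith
  have hcont : ContinuousOn h (Set.Icc (0 : ℝ) 1) := by
    rw [hfun]; exact (Bsum_continuous m f).continuousOn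
  have hmem : Uc / Ic ∈ Set.Ioo (h 1) (h 0) := by
    rw [h0, h1, hM1]
    exact ⟨hc2, hc1⟩
  obtain ⟨p, hpIoo, hpval⟩ := intermediate_value_Ioo' (by norm_num : (0:ℝ) ≤ 1) hcont hmem
  refine ⟨p, ⟨hpIoo, ?_⟩, ?_⟩
  · rw [hpval]; field_simp
  · rintro q ⟨hqIoo, hqval⟩
    have hq : h q = Uc / Ic := by
      rw [eq_div_iff hIc.ne']
      rw [mul_comm]; exact hqval
    have hpIcc : p ∈ Set.Icc (0:ℝ) 1 := Set.Ioo_subset_Icc_self hpIoo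
    have hqIcc : q ∈ Set.Icc (0:ℝ) 1 := Set.Ioo_subset_Icc_self hqIoo
    exact hanti.injOn hqIcc hpIcc (by rw [hq, hpval])
end
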